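/- arXiv:1903.11792 — 3 statements merged into one kernel-verified Lean document; each statement's English description precedes it below -/
import Mathlib

section
/- For any vector u ∈ V and any ψ, φ in the Clifford algebra, the extended metric satisfies ĝ(uψ, φ) + ĝ(ψ, uφ) = 0, i.e., left Clifford multiplication by a vector is anti-self-adjoint with respect to ĝ. -/
open CliffordAlgebra

noncomputable section

variable {V : Type} [AddCommGroup V] [Module ℝ V]

/-- Clifford conjugation `†`: the linear extension of
`(e_{α₁}⋯e_{α_k})† = (-1)^k e_{α_k}⋯e_{α₁}`, i.e. reversal composed with
the grade involution. -/
def cliffConj (Q : QuadraticForm ℝ V) : CliffordAlgebra Q →ₗ[ℝ] CliffordAlgebra Q :=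
  reverse (R := ℝ) ∘ₗ involute.toLinearMap

/-- The scalar (`e_∅`) component `⟨ψ⟩_∅` of a Clifford algebra element, i.e. the
coefficient of `1` in the canonical basis expansion.  Since left multiplication by a
basis element `e_I` with `I ≠ ∅` is traceless, this equals the normalized trace of
left multiplication by `ψ`. -/
def scalarPart (Q : QuadraticForm ℝ V) (ψ : CliffordAlgebra Q) : ℝ :=
  LinearMap.trace ℝ (CliffordAlgebra Q) (LinearMap.mulLeft ℝ ψ) /
    Module.finrank ℝ (CliffordAlgebra Q)

/-- The extended metric `ĝ(ψ,φ) = -½⟨ψ†φ + φ†ψ⟩_∅`. -/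
def gHat (Q : QuadraticForm ℝ V) (ψ φ : CliffordAlgebra Q) : ℝ :=
  -(1/2) * scalarPart Q (cliffConj Q ψ * φ + cliffConj Q φ * ψ)

/-- `γ_v`: left Clifford multiplication by the vector `v`. -/
def gammaL (Q : QuadraticForm ℝ V) (v : V) : Module.End ℝ (CliffordAlgebra Q) :=
  LinearMap.mulLeft ℝ (ι Q v)

/-- The symmetric bilinear form `g` obtained from `Q` by polarization:
`g(u,v) = ½(Q(u+v) - Q u - Q v)`, so that `e_α e_β + e_β e_α = 2 g_{αβ}`. -/
def gForm (Q : QuadraticForm ℝ V) (u v : V) : ℝ := QuadraticMap.polar Q u v / 2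

lemma cliffConj_mul (Q : QuadraticForm ℝ V) (a b : CliffordAlgebra Q) :
    cliffConj Q (a * b) = cliffConj Q b * cliffConj Q a := by
  simp [cliffConj, CliffordAlgebra.reverse.map_mul]

lemma cliffConj_ι (Q : QuadraticForm ℝ V) (v : V) :
    cliffConj Q (ι Q v) = -ι Q v := by
  simp [cliffConj]

lemma scalarPart_add (Q : QuadraticForm ℝ V) (a b : CliffordAlgebra Q) :
    scalarPart Q (a + b) = scalarPart Q a + scalarPart Q b := by
  unfold scalarPart
  have h : LinearMap.mulLeft ℝ (a + b) = LinearMap.mulLeft ℝ a + LinearMap.mulLeft ℝ b := by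
    ext x; simp [add_mul]
  rw [h, map_add, add_div]

lemma scalarPart_zero (Q : QuadraticForm ℝ V) : scalarPart Q 0 = 0 := by
  unfold scalarPart
  rw [LinearMap.mulLeft_zero_eq_zero, map_zero, zero_div]

/-- for any vector `u` and all `ψ, φ` in the Clifford algebra,
`ĝ(uψ, φ) + ĝ(ψ, uφ) = 0`: left Clifford multiplication by a vector is
anti-self-adjoint with respect to the extended metric. -/
theorem gHat_vector_mul_anti_self_adjoint (Q : QuadraticForm ℝ V) [FiniteDimensional ℝ V]
    [FiniteDimensional ℝ (CliffordAlgebra Q)] (u : V) (ψ φ : CliffordAlgebra Q) :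
    gHat Q (ι Q u * ψ) φ + gHat Q ψ (ι Q u * φ) = 0 := by
  unfold gHat
  rw [← mul_add, ← scalarPart_add]
  have h : (cliffConj Q (ι Q u * ψ) * φ + cliffConj Q φ * (ι Q u * ψ)) +
      (cliffConj Q ψ * (ι Q u * φ) + cliffConj Q (ι Q u * φ) * ψ) = 0 := by
    rw [cliffConj_mul, cliffConj_mul, cliffConj_ι]
    noncomm_ring
  rw [h, scalarPart_zero, mul_zero]
end
end

section
/- If Λ = exp(L) where L = u ∧^g w ∈ so(g), and S := exp(σ(L)) where σ(L) = ¼(γ_u γ_w - γ_w γ_u), then S γ_v S^{-1} = γ_{Λ v} for every vector v ∈ V. -/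
open CliffordAlgebra

noncomputable section

variable {V : Type} [AddCommGroup V] [Module ℝ V]

/-- The spin representation on elementary elements:
`σ(u ∧^g v) := ¼(γ_u γ_v - γ_v γ_u)`. -/
def sigmaSpin (Q : QuadraticForm ℝ V) (u v : V) : Module.End ℝ (CliffordAlgebra Q) :=
  (1/4 : ℝ) • (gammaL Q u * gammaL Q v - gammaL Q v * gammaL Q u)

/-- The polarization bilinear form `g` of `Q`, with `g(u,v) = ½ polar Q u v`. -/
def gBilin (Q : QuadraticForm ℝ V) : LinearMap.BilinForm ℝ V :=
  (1/2 : ℝ) • QuadraticMap.polarBilin Q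

/-- The elementary skew-adjoint endomorphism `u ∧^g v : w ↦ g(v,w) u - g(u,w) v`. -/
def wedgeG (g : LinearMap.BilinForm ℝ V) (u v : V) : Module.End ℝ V :=
  (g v).smulRight u - (g u).smulRight v

/-- The exponential of an endomorphism of a finite-dimensional real vector space,
computed through the matrix exponential in an arbitrary basis (the result is
basis-independent). -/
def endExp {W : Type} [AddCommGroup W] [Module ℝ W] [FiniteDimensional ℝ W]
    (f : Module.End ℝ W) : Module.End ℝ W :=
  (LinearMap.toMatrix (Module.finBasis ℝ W) (Module.finBasis ℝ W)).symm
    (NormedSpace.exp (LinearMap.toMatrix (Module.finBasis ℝ W) (Module.finBasis ℝ W) f))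

/-!
By the Clifford relation `γ_a γ_b + γ_b γ_a = 2 g(a,b)`, the commutator of `σ(u ∧ w)` with
`γ_v` is `γ_{(u ∧ w) v}`, i.e. `v ↦ γ_v` intertwines `ad σ(u ∧ w)` with `u ∧ w`. Such an
infinitesimal intertwining integrates: in a Banach algebra,
`t ↦ exp(t a) Φ(exp(-t b) z) exp(-t a)` has zero derivative, so `exp a` conjugates `Φ y` into
`Φ (exp b y)`.
-/

theorem gammaL_mul_add_mul_swap (Q : QuadraticForm ℝ V) (a b : V) :
    gammaL Q a * gammaL Q b + gammaL Q b * gammaL Q a =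
      algebraMap ℝ (Module.End ℝ (CliffordAlgebra Q)) (QuadraticMap.polar Q a b) := by
  ext ψ
  simp only [LinearMap.add_apply, Module.End.mul_apply, gammaL, LinearMap.mulLeft_apply,
    Module.algebraMap_end_apply, ← mul_assoc, ← add_mul, ι_mul_ι_add_swap, ← Algebra.smul_def]

def gammaLinear (Q : QuadraticForm ℝ V) : V →ₗ[ℝ] Module.End ℝ (CliffordAlgebra Q) :=
  LinearMap.mul ℝ _ ∘ₗ ι Q

theorem gammaLinear_apply (Q : QuadraticForm ℝ V) (v : V) : gammaLinear Q v = gammaL Q v :=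
  rfl

theorem lie_lie_eq_of_anticommute {k R : Type*} [CommRing k] [Ring R] [Algebra k R]
    {A B C : R} {α β : k} (hA : A * C + C * A = algebraMap k R α)
    (hB : B * C + C * B = algebraMap k R β) :
    ⁅⁅A, B⁆, C⁆ = (2 * β) • A - (2 * α) • B := by
  rw [Algebra.algebraMap_eq_smul_one] at hA hB
  have hCA : C * A = α • 1 - A * C := eq_sub_of_add_eq' hA
  have hCB : C * B = β • 1 - B * C := eq_sub_of_add_eq' hB
  have hCAB : C * (A * B) = α • B - β • A + A * (B * C) := by
    rw [← mul_assoc, hCA, sub_mul, smul_mul_assoc, one_mul, mul_assoc, hCB, mul_sub,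
      mul_smul_comm, mul_one]
    abel
  have hCBA : C * (B * A) = β • A - α • B + B * (A * C) := by
    rw [← mul_assoc, hCB, sub_mul, smul_mul_assoc, one_mul, mul_assoc, hCA, mul_sub,
      mul_smul_comm, mul_one]
    abel
  simp only [Ring.lie_def, sub_mul, mul_sub, hCAB, hCBA, mul_assoc, two_mul, add_smul]
  abel

theorem wedgeG_gBilin_apply (Q : QuadraticForm ℝ V) (u w v : V) :
    wedgeG (gBilin Q) u w v =
      (QuadraticMap.polar Q w v / 2) • u - (QuadraticMap.polar Q u v / 2) • w := by
  simp only [wedgeG, gBilin, LinearMap.sub_apply, LinearMap.smulRight_apply,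
    LinearMap.smul_apply, QuadraticMap.polarBilin_apply_apply, smul_eq_mul, div_eq_inv_mul]
  norm_num

theorem lie_sigmaSpin_gammaL (Q : QuadraticForm ℝ V) (u w v : V) :
    ⁅sigmaSpin Q u w, gammaL Q v⁆ = gammaL Q (wedgeG (gBilin Q) u w v) := calc
  _ = (1 / 4 : ℝ) • ⁅⁅gammaL Q u, gammaL Q w⁆, gammaL Q v⁆ := by
    rw [sigmaSpin, Ring.lie_def, Ring.lie_def, Ring.lie_def, smul_mul_assoc, mul_smul_comm,
      smul_sub]
  _ = _ := by
    rw [lie_lie_eq_of_anticommute (gammaL_mul_add_mul_swap Q u v) (gammaL_mul_add_mul_swap Q w v),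
      wedgeG_gBilin_apply]
    simp only [← gammaLinear_apply, map_sub, map_smul, smul_sub, smul_smul]
    congr 2 <;> ring

section Exp

open NormedSpace

theorem exp_mul_mul_exp_neg_of_lie {𝕂 A B : Type*} [RCLike 𝕂]
    [NormedRing A] [NormedAlgebra 𝕂 A] [CompleteSpace A]
    [NormedRing B] [NormedAlgebra 𝕂 B] [CompleteSpace B]
    (a : A) (b : B) (Φ : B →L[𝕂] A) (h : ∀ y, ⁅a, Φ y⁆ = Φ (b * y)) (y : B) :
    exp a * Φ y * exp (-a) = Φ (exp b * y) := by
  let F : 𝕂 → A := fun t => exp (t • a) * Φ (exp (t • -b) * (exp b * y)) * exp (t • -a)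
  have hF : ∀ t, HasDerivAt F 0 t := by
    intro t
    have hΦ : HasDerivAt (fun t : 𝕂 => Φ (exp (t • -b) * (exp b * y)))
        (Φ (exp (t • -b) * -b * (exp b * y))) t :=
      Φ.hasFDerivAt.comp_hasDerivAt t ((hasDerivAt_exp_smul_const (-b) t).mul_const _)
    refine (((hasDerivAt_exp_smul_const a t).mul hΦ).mul
      (hasDerivAt_exp_smul_const (-a) t)).congr_deriv ?_
    have hb : exp (t • -b) * -b = -b * exp (t • -b) :=
      ((Commute.refl (-b)).smul_left t).exp_left.eq
    have ha : exp (t • -a) * -a = -a * exp (t • -a) :=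
      ((Commute.refl (-a)).smul_left t).exp_left.eq
    rw [Pi.mul_apply, hb, ha, neg_mul, neg_mul, map_neg, mul_assoc b, ← h, Ring.lie_def]
    noncomm_ring
  have hconst : F 1 = F 0 :=
    is_const_of_deriv_eq_zero (fun t => (hF t).differentiableAt) (fun t => (hF t).deriv) 1 0
  -- the addition formula for `exp` is stated for `ℚ`-algebras
  let : NormedAlgebra ℚ B := .restrictScalars ℚ 𝕂 B
  simpa [F, ← mul_assoc, ← exp_add_of_commute (Commute.refl b).neg_left] using hconst

section EndNorm

variable {W : Type} [AddCommGroup W] [Module ℝ W] [FiniteDimensional ℝ W]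

attribute [local instance] Matrix.linftyOpNormedRing Matrix.linftyOpNormedAlgebra

/- Any Banach-algebra norm on `Module.End ℝ W` would do; transporting the matrix operator norm
along the basis used in `endExp` makes `endExp` the exponential of this Banach algebra. -/
abbrev endNormedRing : NormedRing (Module.End ℝ W) :=
  NormedRing.induced _ _ (LinearMap.toMatrixAlgEquiv (Module.finBasis ℝ W)) (AlgEquiv.injective _)

abbrev endNormedAlgebra :
    @NormedAlgebra ℝ (Module.End ℝ W) _ endNormedRing.toSeminormedRing :=
  NormedAlgebra.induced _ _ _ (LinearMap.toMatrixAlgEquiv (Module.finBasis ℝ W))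

attribute [local instance] endNormedRing endNormedAlgebra

theorem endExp_eq_exp (f : Module.End ℝ W) : endExp f = exp f := by
  let _ : NormedAlgebra ℚ (Module.End ℝ W) := .restrictScalars ℚ ℝ _
  have : CompleteSpace (Module.End ℝ W) := FiniteDimensional.complete ℝ _
  let e := LinearMap.toMatrixAlgEquiv (Module.finBasis ℝ W)
  have he : Continuous e := LinearMap.continuous_of_finiteDimensional e.toLinearMap
  apply e.injective
  rw [map_exp e he]
  exact (LinearMap.toMatrix _ _).apply_symm_apply _

theorem Ring.inverse_endExp (f : Module.End ℝ W) : Ring.inverse (endExp f) = endExp (-f) := by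
  let _ : NormedAlgebra ℚ (Module.End ℝ W) := .restrictScalars ℚ ℝ _
  have : CompleteSpace (Module.End ℝ W) := FiniteDimensional.complete ℝ _
  rw [endExp_eq_exp, endExp_eq_exp, Ring.inverse_exp]

theorem endExp_mul_mul_endExp_neg_of_lie {E : Type} [AddCommGroup E] [Module ℝ E]
    [FiniteDimensional ℝ E] (σ : Module.End ℝ W) (L : Module.End ℝ E)
    (Φ : E →ₗ[ℝ] Module.End ℝ W) (h : ∀ y, ⁅σ, Φ y⁆ = Φ (L y)) (x : E) :
    endExp σ * Φ x * endExp (-σ) = Φ (endExp L x) := by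
  have : CompleteSpace (Module.End ℝ W) := FiniteDimensional.complete ℝ _
  have : CompleteSpace (Module.End ℝ E) := FiniteDimensional.complete ℝ _
  simpa [endExp_eq_exp] using exp_mul_mul_exp_neg_of_lie σ L
    (Φ ∘ₗ LinearMap.applyₗ x).toContinuousLinearMap (fun m => h (m x)) 1

end EndNorm

end Exp

/-- if `Λ = exp(L)` with `L = u ∧^g w ∈ so(g)` and `S = exp(σ(L))`,
then `S γ_v S⁻¹ = γ_{Λv}` for every vector `v`. -/
theorem exp_sigma_conjugates_gamma (Q : QuadraticForm ℝ V) [FiniteDimensional ℝ V]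
    [FiniteDimensional ℝ (CliffordAlgebra Q)] (u w : V)
    (Λ : Module.End ℝ V) (hΛ : Λ = endExp (wedgeG (gBilin Q) u w))
    (S : Module.End ℝ (CliffordAlgebra Q)) (hS : S = endExp (sigmaSpin Q u w)) (v : V) :
    S * gammaL Q v * Ring.inverse S = gammaL Q (Λ v) := by
  subst hΛ hS
  rw [Ring.inverse_endExp]
  exact endExp_mul_mul_endExp_neg_of_lie _ _ (gammaLinear Q) (lie_sigmaSpin_gammaL Q u w) v
end
end

section
/- The scalar projection of the extension of an isometry is preserved: for an orthogonal transformation Λ of (V,g) with induced Clifford algebra automorphism Λ̂, one has ⟨Λ̂ψ⟩_∅ = ⟨ψ⟩_∅ for all ψ ∈ Cl(V,g). -/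
open CliffordAlgebra

noncomputable section

variable {V : Type} [AddCommGroup V] [Module ℝ V]

/-- the scalar projection is preserved by the extension of an isometry:
if `Λ` is orthogonal (with `g` nondegenerate) and `Λ̂` the induced Clifford algebra
automorphism, then `⟨Λ̂ψ⟩_∅ = ⟨ψ⟩_∅`. -/
theorem scalarPart_invariant_under_isometry_extension (Q : QuadraticForm ℝ V)
    [FiniteDimensional ℝ V] [FiniteDimensional ℝ (CliffordAlgebra Q)]
    (hnd : (QuadraticMap.polarBilin Q).Nondegenerate)
    (Λ : V →ₗ[ℝ] V) (hΛ : ∀ u v : V, gForm Q (Λ u) (Λ v) = gForm Q u v)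
    (F : CliffordAlgebra Q →ₐ[ℝ] CliffordAlgebra Q)
    (hF : ∀ v : V, F (ι Q v) = ι Q (Λ v)) (ψ : CliffordAlgebra Q) :
    scalarPart Q (F ψ) = scalarPart Q ψ := by
  -- Λ preserves polar and Q
  have hpolar : ∀ u v : V, QuadraticMap.polar Q (Λ u) (Λ v) = QuadraticMap.polar Q u v := by
    intro u v
    have := hΛ u v
    unfold gForm at this
    linarith
  have hQ : ∀ v : V, Q (Λ v) = Q v := by
    intro v
    have h1 := hpolar v v
    have e1 : ∀ w : V, QuadraticMap.polar Q w w = 2 * Q w := by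
      intro w
      simp [QuadraticMap.polar, QuadraticMap.map_add_self]
      ring
    rw [e1, e1] at h1
    linarith
  -- Λ is injective
  have hinj : Function.Injective Λ := by
    rw [← LinearMap.ker_eq_bot, LinearMap.ker_eq_bot']
    intro v hv
    apply hnd.1 v
    intro u
    have := hpolar v u
    rw [hv] at this
    simpa [QuadraticMap.polar] using this.symm
  have hsurj : Function.Surjective Λ :=
    (LinearMap.injective_iff_surjective).mp hinj
  let ΛE : V ≃ₗ[ℝ] V := LinearEquiv.ofBijective Λ ⟨hinj, hsurj⟩
  -- the inverse algebra hom
  let G : CliffordAlgebra Q →ₐ[ℝ] CliffordAlgebra Q :=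
    CliffordAlgebra.lift Q ⟨(ι Q).comp (ΛE.symm : V ≃ₗ[ℝ] V).toLinearMap, by
      intro m
      simp only [LinearMap.comp_apply, LinearEquiv.coe_coe, CliffordAlgebra.ι_sq_scalar]
      have h2 : Λ (ΛE.symm m) = m := ΛE.apply_symm_apply m
      rw [← hQ (ΛE.symm m), h2]⟩
  have hG : ∀ v : V, G (ι Q v) = ι Q (ΛE.symm v) := by
    intro v; simp [G]
  have hGF : G.comp F = AlgHom.id ℝ (CliffordAlgebra Q) := by
    apply CliffordAlgebra.hom_ext
    ext v
    simp only [AlgHom.toLinearMap_apply, LinearMap.comp_apply, AlgHom.comp_apply, hF, hG,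
      AlgHom.id_apply]
    congr 1
    exact ΛE.symm_apply_apply v
  have hFG : F.comp G = AlgHom.id ℝ (CliffordAlgebra Q) := by
    apply CliffordAlgebra.hom_ext
    ext v
    simp only [AlgHom.toLinearMap_apply, LinearMap.comp_apply, AlgHom.comp_apply, hF, hG,
      AlgHom.id_apply]
    congr 1
    exact ΛE.apply_symm_apply v
  let e : CliffordAlgebra Q ≃ₐ[ℝ] CliffordAlgebra Q := AlgEquiv.ofAlgHom F G hFG hGF
  have hconj : LinearMap.mulLeft ℝ (F ψ) =
      (e.toLinearEquiv.conj) (LinearMap.mulLeft ℝ ψ) := by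
    ext x
    simp only [LinearEquiv.conj_apply, LinearMap.comp_apply, LinearMap.mulLeft_apply,
      LinearEquiv.coe_coe]
    show F ψ * x = e (ψ * e.symm x)
    rw [map_mul]
    congr 1
    exact (e.apply_symm_apply x).symm
  unfold scalarPart
  rw [hconj, LinearMap.trace_conj']
end
end
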